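/- Let T be a tree of order n with diameter at least 4, with l(T) leaves, let u be a fixed leaf, and let T'_u be the tree obtained from T by deleting all leaves except u. Then β(T̊) + l(T) − 1 ≤ Sd_s(T, T^c) ≤ β(T'_u) + l(T) − 1, where T̊ is the subgraph induced by the interior (non-leaf) vertices of T and β denotes vertex cover number. -/

import Mathlib

open SimpleGraph

variable {V : Type*}

/-- `w` strongly resolves `u` and `v` in `G`. -/
def StronglyResolves (G : SimpleGraph V) (w u v : V) : Prop :=
  G.dist u w = G.dist u v + G.dist v w ∨ G.dist v w = G.dist v u + G.dist u w

/-- `S` is a strong metric generator for `G`. -/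
def IsStrongMetricGen (G : SimpleGraph V) (S : Set V) : Prop :=
  ∀ u v : V, u ≠ v → ∃ w ∈ S, StronglyResolves G w u v

/-- The simultaneous strong metric dimension of a family of graphs. -/
noncomputable def SdS (𝒢 : Set (SimpleGraph V)) : ℕ :=
  sInf {n | ∃ S : Set V, S.ncard = n ∧ ∀ G ∈ 𝒢, IsStrongMetricGen G S}

/-- The strong metric dimension of a single graph. -/
noncomputable def sdim (G : SimpleGraph V) : ℕ := SdS {G}

/-- `u` is maximally distant from `v` in `G`. -/
def MaxDistantFrom (G : SimpleGraph V) (u v : V) : Prop :=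
  ∀ w : V, G.Adj u w → G.dist v w ≤ G.dist v u

/-- `u` and `v` are mutually maximally distant in `G`. -/
def MutuallyMaxDistant (G : SimpleGraph V) (u v : V) : Prop :=
  MaxDistantFrom G u v ∧ MaxDistantFrom G v u

/-- The strong resolving graph of `G`. -/
def SRG (G : SimpleGraph V) : SimpleGraph V where
  Adj u v := u ≠ v ∧ MutuallyMaxDistant G u v
  symm := by
    constructor; intro u v h
    exact ⟨h.1.symm, h.2.2, h.2.1⟩
  loopless := by constructor; intro u h; exact h.1 rfl

/-- The boundary of `G`: vertices mutually maximally distant from some vertex. -/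
def Boundary (G : SimpleGraph V) : Set V :=
  {u | ∃ v, MutuallyMaxDistant G u v}

/-- `S` is a vertex cover of `G`. -/
def IsVertexCover (G : SimpleGraph V) (S : Set V) : Prop :=
  ∀ u v : V, G.Adj u v → u ∈ S ∨ v ∈ S

/-- The vertex cover number. -/
noncomputable def vcNum (G : SimpleGraph V) : ℕ :=
  sInf {n | ∃ S : Set V, S.ncard = n ∧ _root_.IsVertexCover G S}

/-- A strong resolving cover: simultaneously a vertex cover and a strong metric generator. -/
def IsStrongResCover (G : SimpleGraph V) (S : Set V) : Prop :=
  _root_.IsVertexCover G S ∧ IsStrongMetricGen G S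

/-- The strong resolving cover number `β_s`. -/
noncomputable def betaS (G : SimpleGraph V) : ℕ :=
  sInf {n | ∃ S : Set V, S.ncard = n ∧ IsStrongResCover G S}

/-- `G` is 2-antipodal. -/
def TwoAntipodal (G : SimpleGraph V) : Prop :=
  ∀ x : V, ∃! y : V, G.dist x y = G.diam

/-- `v` is a leaf of `G` (degree one). -/
def IsLeaf (G : SimpleGraph V) (v : V) : Prop := ∃! w : V, G.Adj v w

/-!
For a graph `G` of diameter at least 4, two `G`-adjacent vertices are at distance 2 in `Gᶜ`, and
all distances in `Gᶜ` are at most 2; hence a strong metric generator of `Gᶜ` contains an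
endpoint of every edge of `G`, i.e. it is a vertex cover of `G`. A strong metric generator of a
connected graph misses at most one leaf, because a leaf lies on no geodesic between two other
vertices.
Counting interior vertices and leaves separately gives the lower bound.

For the upper bound, add all leaves but `u` to a minimum vertex cover of `T'_u`; the result `S`
covers `T`. Two vertices `a ≠ b` outside `S` are not adjacent in `T`, and one of them, say `b`, is
interior. Then `b` has a neighbour `x` farther from `a` than `b`, and `x ∈ S` strongly resolves
`a, b` both in `T` (`b` lies on a geodesic from `a` to `x`) and in `Tᶜ` (there `a` is adjacent to
`b` and to `x`, while `b` and `x` are at distance 2).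
-/

section

variable {G : SimpleGraph V} {a b u w x y z : V}

lemma SimpleGraph.connected_of_diam_ne_zero (h : G.diam ≠ 0) : G.Connected :=
  have := (G.nontrivial_of_diam_ne_zero h).to_nonempty
  connected_of_ediam_ne_top (ediam_ne_top_of_diam_ne_zero h)

lemma SimpleGraph.exists_not_adj_not_adj_of_four_le_diam (hd : 4 ≤ G.diam) (hab : G.Adj a b) :
    ∃ z, z ≠ a ∧ z ≠ b ∧ ¬G.Adj a z ∧ ¬G.Adj b z := by
  by_contra! h
  have : Nonempty V := ⟨a⟩
  have hG := connected_of_diam_ne_zero (G := G) (by omega)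
  have hnear : ∀ z, G.dist a z ≤ 1 ∨ G.dist b z ≤ 1 := by
    intro z
    by_cases hza : z = a
    · simp [hza]
    by_cases hz : G.Adj a z
    · exact Or.inl (dist_eq_one_iff_adj.mpr hz).le
    by_cases hzb : z = b
    · simp [hzb]
    · exact Or.inr (dist_eq_one_iff_adj.mpr (h z hza hzb hz)).le
  obtain ⟨x, y, hxy⟩ := G.exists_dist_eq_diam
  have hab1 : G.dist a b = 1 := dist_eq_one_iff_adj.mpr hab
  have t1 : G.dist x y ≤ G.dist x a + G.dist a y := hG.dist_triangle
  have t2 : G.dist x y ≤ G.dist x b + G.dist b y := hG.dist_triangle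
  have t3 : G.dist a y ≤ G.dist a b + G.dist b y := hG.dist_triangle
  have t4 : G.dist b y ≤ G.dist b a + G.dist a y := hG.dist_triangle
  have hxa : G.dist x a = G.dist a x := dist_comm
  have hxb : G.dist x b = G.dist b x := dist_comm
  have hba : G.dist b a = 1 := dist_comm.trans hab1
  have := hnear x
  have := hnear y
  omega

lemma SimpleGraph.exists_compl_walk_length_le_two (hd : 4 ≤ G.diam) (a b : V) :
    ∃ p : Gᶜ.Walk a b, p.length ≤ 2 := by
  by_cases hab : a = b
  · subst hab
    exact ⟨.nil, by simp⟩
  by_cases hadj : G.Adj a b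
  · obtain ⟨z, hza, hzb, haz, hbz⟩ := exists_not_adj_not_adj_of_four_le_diam hd hadj
    have h₁ : Gᶜ.Adj a z := (compl_adj G a z).mpr ⟨Ne.symm hza, haz⟩
    have h₂ : Gᶜ.Adj z b := (compl_adj G z b).mpr ⟨hzb, fun h => hbz h.symm⟩
    exact ⟨.cons h₁ (.cons h₂ .nil), by simp⟩
  · exact ⟨.cons ((compl_adj G a b).mpr ⟨hab, hadj⟩) .nil, by simp⟩

lemma SimpleGraph.compl_reachable_of_four_le_diam (hd : 4 ≤ G.diam) (a b : V) :
    Gᶜ.Reachable a b :=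
  (exists_compl_walk_length_le_two hd a b).elim fun p _ => p.reachable

lemma SimpleGraph.compl_dist_le_two (hd : 4 ≤ G.diam) (a b : V) : Gᶜ.dist a b ≤ 2 :=
  (exists_compl_walk_length_le_two hd a b).elim fun p hp => (dist_le p).trans hp

lemma SimpleGraph.compl_dist_eq_two_of_adj (hd : 4 ≤ G.diam) (hab : G.Adj a b) :
    Gᶜ.dist a b = 2 := by
  have hpos := (compl_reachable_of_four_le_diam hd a b).pos_dist_of_ne hab.ne
  have hne : Gᶜ.dist a b ≠ 1 := fun h => ((compl_adj G a b).mp (dist_eq_one_iff_adj.mp h)).2 hab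
  have := compl_dist_le_two hd a b
  omega

lemma isVertexCover_of_isStrongMetricGen_compl (hd : 4 ≤ G.diam) {S : Set V}
    (hS : IsStrongMetricGen Gᶜ S) : _root_.IsVertexCover G S := by
  intro a b hab
  obtain ⟨w, hwS, hres⟩ := hS a b hab.ne
  -- `a` and `b` are at the maximal distance 2 in `Gᶜ`, so only `a` or `b` can resolve them
  have hab₂ := compl_dist_eq_two_of_adj hd hab
  have hba₂ := compl_dist_eq_two_of_adj hd hab.symm
  rcases hres with h | h
  · have := compl_dist_le_two hd a w
    have hbw := (compl_reachable_of_four_le_diam hd b w).dist_eq_zero_iff.mp (by omega)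
    exact Or.inr (hbw ▸ hwS)
  · have := compl_dist_le_two hd b w
    have haw := (compl_reachable_of_four_le_diam hd a w).dist_eq_zero_iff.mp (by omega)
    exact Or.inl (haw ▸ hwS)

lemma IsLeaf.dist_eq_dist_add_one (hG : G.Connected) (hy : IsLeaf G y) (hn : G.Adj y u)
    (hz : z ≠ y) : G.dist y z = G.dist u z + 1 := by
  have htri : G.dist y z ≤ G.dist y u + G.dist u z := hG.dist_triangle
  rw [dist_eq_one_iff_adj.mpr hn] at htri
  obtain ⟨p, hp⟩ := hG.exists_walk_length_eq_dist y z
  cases p with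
  | nil => exact absurd rfl hz
  | cons h q =>
    obtain rfl := hy.unique h hn
    have hq := dist_le q
    simp only [Walk.length_cons] at hp
    omega

lemma IsLeaf.dist_lt_dist_add_dist (hG : G.Connected) (hy : IsLeaf G y) (hx : x ≠ y)
    (hw : w ≠ y) : G.dist x w < G.dist x y + G.dist y w := by
  obtain ⟨u, hu, -⟩ := id hy
  have hyx := hy.dist_eq_dist_add_one hG hu hx
  have hyw := hy.dist_eq_dist_add_one hG hu hw
  have htri : G.dist x w ≤ G.dist x u + G.dist u w := hG.dist_triangle
  rw [dist_comm (u := y), dist_comm (u := u) (v := x)] at hyx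
  omega

lemma IsLeaf.eq_or_eq_of_stronglyResolves (hG : G.Connected) (hx : IsLeaf G x)
    (hy : IsLeaf G y) (hxy : x ≠ y) (h : StronglyResolves G w x y) : w = x ∨ w = y := by
  by_contra! hw
  rcases h with h | h
  · exact (hy.dist_lt_dist_add_dist hG hxy hw.2).ne h
  · exact (hx.dist_lt_dist_add_dist hG hxy.symm hw.1).ne h

lemma IsStrongMetricGen.subsingleton_leaves_diff (hG : G.Connected) {S : Set V}
    (hS : IsStrongMetricGen G S) : ({v | IsLeaf G v} \ S).Subsingleton := by
  rintro x ⟨hx, hxS⟩ y ⟨hy, hyS⟩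
  by_contra hxy
  obtain ⟨w, hwS, hw⟩ := hS x y hxy
  rcases hx.eq_or_eq_of_stronglyResolves hG hy hxy hw with rfl | rfl <;> contradiction

lemma exists_adj_adj_of_not_isLeaf [Nontrivial V] (hG : G.Preconnected) (hb : ¬IsLeaf G b) :
    ∃ x y, x ≠ y ∧ G.Adj b x ∧ G.Adj b y := by
  obtain ⟨x, hx⟩ := hG.exists_adj_of_nontrivial b
  obtain ⟨y, hy, hyx⟩ : ∃ y, G.Adj b y ∧ y ≠ x := by
    by_contra! h
    exact hb ⟨x, hx, h⟩
  exact ⟨x, y, hyx.symm, hx, hy⟩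

lemma SimpleGraph.IsTree.eq_of_adj_of_dist_eq_add_one (hT : G.IsTree) (hx : G.Adj x b)
    (hy : G.Adj y b) (hdx : G.dist a b = G.dist a x + 1) (hdy : G.dist a b = G.dist a y + 1) :
    x = y := by
  -- geodesics to `x` and to `y`, followed by the edge to `b`, are both paths from `a` to `b`
  obtain ⟨p, hp⟩ := hT.connected.exists_walk_length_eq_dist a x
  obtain ⟨q, hq⟩ := hT.connected.exists_walk_length_eq_dist a y
  have hp' := (p.concat hx).isPath_of_length_eq_dist (by rw [Walk.length_concat, hp, hdx])
  have hq' := (q.concat hy).isPath_of_length_eq_dist (by rw [Walk.length_concat, hq, hdy])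
  exact (Walk.concat_inj ((hT.existsUnique_path a b).unique hp' hq')).1

lemma SimpleGraph.IsTree.exists_adj_dist_eq_add_one [Nontrivial V] (hT : G.IsTree)
    (hb : ¬IsLeaf G b) (a : V) : ∃ x, G.Adj b x ∧ G.dist a x = G.dist a b + 1 := by
  obtain ⟨x, y, hxy, hx, hy⟩ := exists_adj_adj_of_not_isLeaf hT.connected.preconnected hb
  by_contra! h
  have hdx := (hT.dist_eq_dist_add_one_of_adj a hx).resolve_right (h x hx)
  have hdy := (hT.dist_eq_dist_add_one_of_adj a hy).resolve_right (h y hy)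
  exact hxy (hT.eq_of_adj_of_dist_eq_add_one hx.symm hy.symm hdx hdy)

lemma SimpleGraph.IsTree.exists_stronglyResolves [Nontrivial V] (hT : G.IsTree) {S : Set V}
    (hS : _root_.IsVertexCover G S) (hbS : b ∉ S) (hb : ¬IsLeaf G b) (a : V) :
    ∃ w ∈ S, StronglyResolves G w a b := by
  obtain ⟨x, hx, hdx⟩ := hT.exists_adj_dist_eq_add_one hb a
  refine ⟨x, (hS b x hx).resolve_left hbS, Or.inl ?_⟩
  rw [hdx, dist_eq_one_iff_adj.mpr hx]

lemma SimpleGraph.IsTree.exists_stronglyResolves_compl [Nontrivial V] (hT : G.IsTree)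
    (hd : 4 ≤ G.diam) {S : Set V} (hS : _root_.IsVertexCover G S) (hbS : b ∉ S)
    (hb : ¬IsLeaf G b) (hab : a ≠ b) (hnadj : ¬G.Adj a b) :
    ∃ w ∈ S, StronglyResolves Gᶜ w a b := by
  obtain ⟨x, hx, hdx⟩ := hT.exists_adj_dist_eq_add_one hb a
  have hax : 2 ≤ G.dist a x := by
    have := hT.connected.pos_dist_of_ne hab
    omega
  have hax' : Gᶜ.Adj a x := by
    refine (compl_adj G a x).mpr ⟨?_, fun h => ?_⟩
    · rintro rfl
      simp at hax
    · rw [dist_eq_one_iff_adj.mpr h] at hax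
      omega
  have hba' : Gᶜ.Adj b a := (compl_adj G b a).mpr ⟨hab.symm, fun h => hnadj h.symm⟩
  refine ⟨x, (hS b x hx).resolve_left hbS, Or.inr ?_⟩
  rw [compl_dist_eq_two_of_adj hd hx, dist_eq_one_iff_adj.mpr hba', dist_eq_one_iff_adj.mpr hax']

lemma SimpleGraph.IsTree.isStrongMetricGen_of_isVertexCover (hT : G.IsTree) (hd : 4 ≤ G.diam)
    {S : Set V} (hS : _root_.IsVertexCover G S) (hL : ∀ v, IsLeaf G v → v ∉ S → v = u) :
    ∀ H ∈ ({G, Gᶜ} : Set (SimpleGraph V)), IsStrongMetricGen H S := by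
  have : Nontrivial V := G.nontrivial_of_diam_ne_zero (by omega)
  have key : ∀ a b, a ≠ b → a ∉ S → b ∉ S → ¬IsLeaf G b →
      ∀ H ∈ ({G, Gᶜ} : Set (SimpleGraph V)), ∃ w ∈ S, StronglyResolves H w a b := by
    rintro a b hab haS hbS hb H (rfl | rfl)
    · exact hT.exists_stronglyResolves hS hbS hb a
    · exact hT.exists_stronglyResolves_compl hd hS hbS hb hab fun h => (hS a b h).elim haS hbS
  intro H hH a b hab
  by_cases haS : a ∈ S
  · exact ⟨a, haS, Or.inr (by simp)⟩
  by_cases hbS : b ∈ S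
  · exact ⟨b, hbS, Or.inl (by simp)⟩
  by_cases hb : IsLeaf G b
  · have ha : ¬IsLeaf G a := fun ha => hab ((hL a ha haS).trans (hL b hb hbS).symm)
    obtain ⟨w, hw, h⟩ := key b a hab.symm hbS haS ha H hH
    exact ⟨w, hw, h.symm⟩
  · exact key a b hab haS hbS hb H hH

lemma exists_ncard_eq_SdS (𝒢 : Set (SimpleGraph V)) :
    ∃ S : Set V, S.ncard = SdS 𝒢 ∧ ∀ G ∈ 𝒢, IsStrongMetricGen G S :=
  Nat.sInf_mem (s := {n | ∃ S : Set V, S.ncard = n ∧ ∀ G ∈ 𝒢, IsStrongMetricGen G S})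
    ⟨_, Set.univ, rfl, fun _ _ _ b _ => ⟨b, trivial, Or.inl (by simp)⟩⟩

lemma SdS_le_ncard {𝒢 : Set (SimpleGraph V)} {S : Set V}
    (hS : ∀ G ∈ 𝒢, IsStrongMetricGen G S) : SdS 𝒢 ≤ S.ncard :=
  Nat.sInf_le ⟨S, rfl, hS⟩

lemma exists_isVertexCover_ncard_eq_vcNum (G : SimpleGraph V) :
    ∃ C : Set V, C.ncard = vcNum G ∧ _root_.IsVertexCover G C :=
  Nat.sInf_mem (s := {n | ∃ C : Set V, C.ncard = n ∧ _root_.IsVertexCover G C})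
    ⟨_, Set.univ, rfl, fun _ _ _ => Or.inl trivial⟩

lemma vcNum_induce_le {S : Set V} (hS : _root_.IsVertexCover G S) (s : Set V) :
    vcNum (G.induce s) ≤ (S ∩ s).ncard := by
  have : vcNum (G.induce s) ≤ (Subtype.val ⁻¹' S : Set s).ncard :=
    Nat.sInf_le ⟨_, rfl, fun x y hxy => hS x y hxy⟩
  rwa [← Set.ncard_image_of_injective _ Subtype.val_injective, Subtype.image_preimage_coe,
    Set.inter_comm] at this

lemma IsVertexCover.image_val_union_compl {s : Set V} {C : Set s}
    (hC : _root_.IsVertexCover (G.induce s) C) :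
    _root_.IsVertexCover G (Subtype.val '' C ∪ sᶜ) := by
  intro x y hxy
  by_cases hx : x ∈ s
  · by_cases hy : y ∈ s
    · rcases hC ⟨x, hx⟩ ⟨y, hy⟩ hxy with h | h
      exacts [Or.inl (Or.inl ⟨_, h, rfl⟩), Or.inr (Or.inl ⟨_, h, rfl⟩)]
    · exact Or.inr (Or.inr hy)
  · exact Or.inl (Or.inr hx)

lemma vcNum_interior_add_ncard_leaves_le [Finite V] (hd : 4 ≤ G.diam) {S : Set V}
    (hS : ∀ H ∈ ({G, Gᶜ} : Set (SimpleGraph V)), IsStrongMetricGen H S) :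
    vcNum (G.induce {v | ¬IsLeaf G v}) + {v | IsLeaf G v}.ncard ≤ S.ncard + 1 := by
  have hvc := vcNum_induce_le (isVertexCover_of_isStrongMetricGen_compl hd (hS Gᶜ (by simp)))
    {v | ¬IsLeaf G v}
  have hleaves : ({v | IsLeaf G v} \ S).ncard ≤ 1 :=
    Set.ncard_le_one_iff_subsingleton.mpr
      ((hS G (by simp)).subsingleton_leaves_diff (connected_of_diam_ne_zero (by omega)))
  have hsplitS := Set.ncard_inter_add_ncard_sdiff_eq_ncard S {v | IsLeaf G v}
  have hsplitL := Set.ncard_inter_add_ncard_sdiff_eq_ncard {v | IsLeaf G v} S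
  rw [Set.inter_comm] at hsplitL
  rw [show S \ {v | IsLeaf G v} = S ∩ {v | ¬IsLeaf G v} from rfl] at hsplitS
  omega

lemma SimpleGraph.IsTree.SdS_compl_add_one_le [Finite V] (hT : G.IsTree) (hd : 4 ≤ G.diam)
    (hu : IsLeaf G u) :
    SdS {G, Gᶜ} + 1 ≤
      vcNum (G.induce ({v | ¬IsLeaf G v} ∪ {u})) + {v | IsLeaf G v}.ncard := by
  set J : Set V := {v | ¬IsLeaf G v} ∪ {u}
  obtain ⟨C, hC, hcov⟩ := exists_isVertexCover_ncard_eq_vcNum (G.induce J)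
  have hJc : Jᶜ = {v | IsLeaf G v} \ {u} := by
    ext v
    simp [J, and_comm]
  have hgen := hT.isStrongMetricGen_of_isVertexCover hd hcov.image_val_union_compl (u := u)
    fun v hv hvS => by_contra fun hvu => hvS (Or.inr (hJc ▸ ⟨hv, hvu⟩))
  have hdisj : Disjoint (Subtype.val '' C) Jᶜ :=
    disjoint_compl_right.mono_left (Subtype.coe_image_subset _ _)
  have hcard := SdS_le_ncard hgen
  rw [Set.ncard_union_eq hdisj, Set.ncard_image_of_injective _ Subtype.val_injective, hC, hJc,
    Set.ncard_sdiff_singleton_of_mem (s := {v | IsLeaf G v}) hu] at hcard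
  have := (Set.ncard_pos (s := {v | IsLeaf G v})).mpr ⟨u, hu⟩
  omega

end

theorem stmt19 [Fintype V] (T : SimpleGraph V) (hT : T.IsTree) (hd : 4 ≤ T.diam)
    (u : V) (hu : IsLeaf T u) :
    vcNum (T.induce {v : V | ¬ IsLeaf T v}) + {v : V | IsLeaf T v}.ncard - 1
        ≤ SdS {T, Tᶜ} ∧
    SdS {T, Tᶜ} ≤
      vcNum (T.induce ({v : V | ¬ IsLeaf T v} ∪ {u})) + {v : V | IsLeaf T v}.ncard - 1 := by
  obtain ⟨S, hS, hgen⟩ := exists_ncard_eq_SdS ({T, Tᶜ} : Set (SimpleGraph V))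
  have hlower := vcNum_interior_add_ncard_leaves_le hd hgen
  have hupper := hT.SdS_compl_add_one_le hd hu
  omega
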